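/- Let ℓ be a prime, n ≥ 1, g ≥ 1, and let V be a free module of rank 2g over ℤ/ℓⁿℤ equipped with an alternating nondegenerate bilinear form ⟨·,·⟩. Let M ⊆ V be a submodule that is isotropic for ⟨·,·⟩ and maximal under inclusion among isotropic submodules of V. Then there exists a submodule G ⊆ M[ℓ] such that G, viewed inside V[ℓ], is isotropic for the induced pairing ⟨·,·⟩_ℓ on V[ℓ] and maximal under inclusion among submodules of V[ℓ] isotropic for ⟨·,·⟩_ℓ. -/

import Mathlib

/-!
Since `M` is maximal isotropic and `B` is alternating, `M` is its own orthogonal. Every element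
`m ∈ M` is a lift of `ℓ^(n-1) • m`, so the torsion submodule `ℓ^(n-1) • M ⊆ M[ℓ]` is isotropic for
the induced pairing, and by Zorn it extends to a maximal one `G` among the isotropic submodules of
`M[ℓ]`. If `G ⊆ G' ⊆ V[ℓ]` with `G'` isotropic, then `⟨ℓ^(n-1) • m, y⟩_ℓ = B m y` vanishes for all
`m ∈ M` and `y ∈ G'`, so `G' ⊆ M^⊥ = M`, and maximality of `G` inside `M[ℓ]` gives `G' = G`.
-/

namespace Paper

open Pointwise Submodule

variable {R V : Type*} [CommRing R] [AddCommGroup V] [Module R V] {B : V →ₗ[R] V →ₗ[R] R}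

def IsIsotropic (B : V →ₗ[R] V →ₗ[R] R) (M : Submodule R V) : Prop :=
  ∀ x ∈ M, ∀ y ∈ M, B x y = 0

/-- With `t = ℓ ^ (n - 1)` this is isotropy for the induced pairing `⟨x, y⟩_ℓ = B x̃ y`. -/
def IsInducedIsotropic (B : V →ₗ[R] V →ₗ[R] R) (t : R) (G : Submodule R V) : Prop :=
  ∀ x ∈ G, ∀ y ∈ G, ∀ x' : V, t • x' = x → B x' y = 0

theorem mem_of_forall_apply_eq_zero_of_maximal (halt : B.IsAlt) {M : Submodule R V}
    (hMiso : IsIsotropic B M) (hMmax : ∀ M', IsIsotropic B M' → M ≤ M' → M' = M) {y : V}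
    (hy : ∀ m ∈ M, B m y = 0) : y ∈ M := by
  have hiso : IsIsotropic B (M ⊔ R ∙ y) := by
    intro x hx z hz
    obtain ⟨m, hm, ya, hay, rfl⟩ := mem_sup.mp hx
    obtain ⟨m', hm', yb, hby, rfl⟩ := mem_sup.mp hz
    obtain ⟨a, rfl⟩ := mem_span_singleton.mp hay
    obtain ⟨b, rfl⟩ := mem_span_singleton.mp hby
    have hym' : B y m' = 0 := by rw [← halt.neg, hy m' hm', neg_zero]
    simp [hMiso m hm m' hm', hy m hm, hym', halt y]
  rw [← hMmax _ hiso le_sup_left]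
  exact mem_sup_right (mem_span_singleton_self y)

theorem isInducedIsotropic_smul {M : Submodule R V} (hMiso : IsIsotropic B M) (t : R) :
    IsInducedIsotropic B t (t • M) := by
  rintro - hx y hy x' rfl
  obtain ⟨m, hm, rfl⟩ := (mem_smul_pointwise_iff_exists _ _ _).mp hy
  rw [map_smul, ← LinearMap.smul_apply, ← map_smul]
  exact hMiso _ (smul_le_self_of_tower t M hx) m hm

theorem IsInducedIsotropic.sSup {t : R} {c : Set (Submodule R V)} (hne : c.Nonempty)
    (hdir : DirectedOn (· ≤ ·) c) (hc : ∀ G ∈ c, IsInducedIsotropic B t G) :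
    IsInducedIsotropic B t (sSup c) := by
  intro x hx y hy x' hx'
  obtain ⟨G₁, hG₁, hxG₁⟩ := (mem_sSup_of_directed hne hdir).mp hx
  obtain ⟨G₂, hG₂, hyG₂⟩ := (mem_sSup_of_directed hne hdir).mp hy
  obtain ⟨G, hG, h₁, h₂⟩ := hdir G₁ hG₁ G₂ hG₂
  exact hc G hG x (h₁ hxG₁) y (h₂ hyG₂) x' hx'

theorem exists_le_maximal_isInducedIsotropic (N : Submodule R V) (t : R) {G₀ : Submodule R V}
    (hG₀N : G₀ ≤ N) (hG₀ : IsInducedIsotropic B t G₀) :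
    ∃ G, G₀ ≤ G ∧ Maximal (fun G => G ≤ N ∧ IsInducedIsotropic B t G) G :=
  zorn_le_nonempty₀ {G | G ≤ N ∧ IsInducedIsotropic B t G}
    (fun c hcS hc G hG => ⟨sSup c, ⟨sSup_le fun _ hH => (hcS hH).1,
      .sSup ⟨G, hG⟩ hc.directedOn fun _ hH => (hcS hH).2⟩, fun _ => le_sSup⟩)
    G₀ ⟨hG₀N, hG₀⟩

theorem exists_maximal_isInducedIsotropic_le_of_maximal (halt : B.IsAlt) {M : Submodule R V}
    (hMiso : IsIsotropic B M) (hMmax : ∀ M', IsIsotropic B M' → M ≤ M' → M' = M)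
    {s t : R} (hst : s * t = 0) :
    ∃ G : Submodule R V, G ≤ M ∧ G ≤ torsionBy R V s ∧ IsInducedIsotropic B t G ∧
      ∀ G', G' ≤ torsionBy R V s → IsInducedIsotropic B t G' → G ≤ G' → G' = G := by
  have htM : t • M ≤ M ⊓ torsionBy R V s := by
    refine le_inf (smul_le_self_of_tower t M) fun x hx => ?_
    obtain ⟨m, -, rfl⟩ := (mem_smul_pointwise_iff_exists _ _ _).mp hx
    rw [mem_torsionBy_iff, smul_smul, hst, zero_smul]
  obtain ⟨G, htMG, ⟨hGN, hGiso⟩, hGmax⟩ :=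
    exists_le_maximal_isInducedIsotropic _ t htM (isInducedIsotropic_smul hMiso t)
  refine ⟨G, hGN.trans inf_le_left, hGN.trans inf_le_right, hGiso, fun G' htor hiso hGG' => ?_⟩
  have hG'M : G' ≤ M := fun y hy => mem_of_forall_apply_eq_zero_of_maximal halt hMiso hMmax
    fun m hm => hiso _ (hGG' (htMG (smul_mem_pointwise_smul m t M hm))) y hy m rfl
  exact le_antisymm (hGmax ⟨le_inf hG'M htor, hiso⟩ hGG') hGG'

theorem natCast_mul_pow_pred_eq_zero (ℓ n : ℕ) :
    (ℓ : ZMod (ℓ ^ n)) * (ℓ : ZMod (ℓ ^ n)) ^ (n - 1) = 0 := by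
  cases n with
  | zero => exact (ZMod.subsingleton_iff.mpr (pow_zero ℓ)).elim _ _
  | succ n => rw [← pow_succ', Nat.add_sub_cancel, ← Nat.cast_pow, ZMod.natCast_self]

theorem statement6_general (ℓ n : ℕ)
    (V : Type) [AddCommGroup V] [Module (ZMod (ℓ^n)) V]
    (B : V →ₗ[ZMod (ℓ^n)] V →ₗ[ZMod (ℓ^n)] ZMod (ℓ^n))
    (halt : ∀ v : V, B v v = 0)
    (M : Submodule (ZMod (ℓ^n)) V)
    (hMiso : ∀ x ∈ M, ∀ y ∈ M, B x y = 0)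
    (hMmax : ∀ M' : Submodule (ZMod (ℓ^n)) V,
      (∀ x ∈ M', ∀ y ∈ M', B x y = 0) → M ≤ M' → M' = M) :
    ∃ G : Submodule (ZMod (ℓ^n)) V,
      -- `G ⊆ M[ℓ]`:
      G ≤ M ∧ (∀ x ∈ G, (ℓ : ZMod (ℓ^n)) • x = 0) ∧
      -- `G` is isotropic for the induced pairing on `V[ℓ]`:
      (∀ x ∈ G, ∀ y ∈ G, ∀ x' : V, ((ℓ : ZMod (ℓ^n))^(n-1)) • x' = x → B x' y = 0) ∧
      -- `G` is maximal among submodules of `V[ℓ]` isotropic for the induced pairing: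
      (∀ G' : Submodule (ZMod (ℓ^n)) V,
        (∀ x ∈ G', (ℓ : ZMod (ℓ^n)) • x = 0) →
        (∀ x ∈ G', ∀ y ∈ G', ∀ x' : V, ((ℓ : ZMod (ℓ^n))^(n-1)) • x' = x → B x' y = 0) →
        G ≤ G' → G' = G) :=
  exists_maximal_isInducedIsotropic_le_of_maximal halt hMiso hMmax
    (natCast_mul_pow_pred_eq_zero ℓ n)

/-- maximal isotropic subgroups and ℓ-torsion.
Let `ℓ` be a prime, `n ≥ 1`, `g ≥ 1`, and `V` a free module of rank `2g` over `ℤ/ℓⁿℤ`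
equipped with an alternating nondegenerate bilinear form `B`.  If `M ⊆ V` is a maximal
isotropic submodule, then there is a submodule `G ⊆ M[ℓ]` which, viewed inside `V[ℓ]`, is
maximal isotropic for the induced pairing `⟨x, y⟩_ℓ := B x̃ y` (where `ℓ^(n-1)·x̃ = x`). -/
theorem statement6 (ℓ n g : ℕ) (hℓ : Nat.Prime ℓ) (hn : 1 ≤ n) (hg : 1 ≤ g)
    (V : Type) [AddCommGroup V] [Module (ZMod (ℓ^n)) V]
    (bV : Module.Basis (Fin (2*g)) (ZMod (ℓ^n)) V)
    (B : V →ₗ[ZMod (ℓ^n)] V →ₗ[ZMod (ℓ^n)] ZMod (ℓ^n))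
    (halt : ∀ v : V, B v v = 0)
    (hnondeg : ∀ v : V, (∀ w : V, B v w = 0) → v = 0)
    (M : Submodule (ZMod (ℓ^n)) V)
    (hMiso : ∀ x ∈ M, ∀ y ∈ M, B x y = 0)
    (hMmax : ∀ M' : Submodule (ZMod (ℓ^n)) V,
      (∀ x ∈ M', ∀ y ∈ M', B x y = 0) → M ≤ M' → M' = M) :
    ∃ G : Submodule (ZMod (ℓ^n)) V,
      -- `G ⊆ M[ℓ]`:
      G ≤ M ∧ (∀ x ∈ G, (ℓ : ZMod (ℓ^n)) • x = 0) ∧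
      -- `G` is isotropic for the induced pairing on `V[ℓ]`:
      (∀ x ∈ G, ∀ y ∈ G, ∀ x' : V, ((ℓ : ZMod (ℓ^n))^(n-1)) • x' = x → B x' y = 0) ∧
      -- `G` is maximal among submodules of `V[ℓ]` isotropic for the induced pairing:
      (∀ G' : Submodule (ZMod (ℓ^n)) V,
        (∀ x ∈ G', (ℓ : ZMod (ℓ^n)) • x = 0) →
        (∀ x ∈ G', ∀ y ∈ G', ∀ x' : V, ((ℓ : ZMod (ℓ^n))^(n-1)) • x' = x → B x' y = 0) →
        G ≤ G' → G' = G) :=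
  statement6_general ℓ n V B halt M hMiso hMmax

end Paper
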